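/- Positivity of the doubly anti-symmetrized kernel: let n ≥ 2 and 0 < α < 2. For all x, y in the quarter space I = {z ∈ ℝⁿ : z₁ > 0, z₂ > 0} with x ≠ y, one has K(x,y) := |x − y|^{−(n+α)} − |x − T₁y|^{−(n+α)} − |x − T₂y|^{−(n+α)} + |x − T₁T₂y|^{−(n+α)} ≥ 0. -/

import Mathlib

open MeasureTheory Filter

noncomputable section

/-- the `i`-th coordinate (0-indexed) of a point of `ℝⁿ`; `0` if out of range. -/
def coord {n : ℕ} (x : EuclideanSpace ℝ (Fin n)) (i : ℕ) : ℝ :=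
  if h : i < n then x ⟨i, h⟩ else 0

/-- the reflection about the hyperplane `{xᵢ = 0}` (0-indexed `i`). -/
def reflect {n : ℕ} (i : ℕ) (x : EuclideanSpace ℝ (Fin n)) : EuclideanSpace ℝ (Fin n) :=
  WithLp.toLp 2 (fun j : Fin n => if (j : ℕ) = i then -(x j) else x j)

/-- replace the `i`-th coordinate of `x` by `t`. -/
def setCoord {n : ℕ} (i : ℕ) (x : EuclideanSpace ℝ (Fin n)) (t : ℝ) :
    EuclideanSpace ℝ (Fin n) :=
  WithLp.toLp 2 (fun j : Fin n => if (j : ℕ) = i then t else x j)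

/-- The fractional Laplacian `(-Δ)^{α/2} u (x)` exists and equals `ℓ`
(Cauchy principal value with normalization constant `cnα`). -/
def HasFracLap (n : ℕ) (α cnα : ℝ) (u : EuclideanSpace ℝ (Fin n) → ℝ)
    (x : EuclideanSpace ℝ (Fin n)) (ℓ : ℝ) : Prop :=
  Tendsto (fun ε : ℝ =>
      cnα * ∫ y in {y : EuclideanSpace ℝ (Fin n) | ε ≤ ‖y - x‖},
        (u x - u y) / ‖x - y‖ ^ ((n : ℝ) + α))
    (nhdsWithin 0 (Set.Ioi 0)) (nhds ℓ)

/-- `u ∈ C^{1,1}_loc(U)`: every point of `U` has a neighborhood on which `u` is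
differentiable with Lipschitz derivative. -/
def C11loc {n : ℕ} (u : EuclideanSpace ℝ (Fin n) → ℝ)
    (U : Set (EuclideanSpace ℝ (Fin n))) : Prop :=
  ∀ x ∈ U, ∃ V ∈ nhds x, ∃ f' : EuclideanSpace ℝ (Fin n) → (EuclideanSpace ℝ (Fin n) →L[ℝ] ℝ),
    (∀ y ∈ V, HasFDerivAt u (f' y) y) ∧ ∃ L : NNReal, LipschitzOnWith L f' V

/-!
With `A = ‖x - y‖²`, the squared distances from `x` to `T₁y`, `T₂y`, `T₁T₂y` are `A + s`,
`A + t`, `A + s + t` with `s = 4x₁y₁ > 0`, `t = 4x₂y₂ > 0`. Writing each power of a distance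
as `f` of its square, `f u = u ^ (-(n + α) / 2)` is convex on `(0, ∞)`, so
`f (A + s) + f (A + t) ≤ f A + f (A + s + t)`, which is `K(x, y) ≥ 0`.
-/

open Set

lemma Real.convexOn_rpow_neg {p : ℝ} (hp : 0 ≤ p) :
    ConvexOn ℝ (Ioi 0) fun x : ℝ ↦ x ^ (-p) := by
  refine ⟨convex_Ioi 0, fun x hx y hy a b ha hb hab ↦ ?_⟩
  have hxy : 0 < a • x + b • y := convex_Ioi 0 hx hy ha hb hab
  have hlog := strictConcaveOn_log_Ioi.concaveOn.2 hx hy ha hb hab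
  simp only [smul_eq_mul] at hxy hlog ⊢
  rw [rpow_def_of_pos hx, rpow_def_of_pos hy, rpow_def_of_pos hxy]
  calc exp (log (a * x + b * y) * -p)
      ≤ exp (a * (log x * -p) + b * (log y * -p)) := by
        gcongr
        nlinarith
    _ ≤ a * exp (log x * -p) + b * exp (log y * -p) :=
        convexOn_exp.2 (mem_univ _) (mem_univ _) ha hb hab

theorem ConvexOn.map_add_map_le_of_add_eq {𝕜 : Type*} [Field 𝕜] [LinearOrder 𝕜]
    [IsStrictOrderedRing 𝕜] {s : Set 𝕜} {f : 𝕜 → 𝕜} (hf : ConvexOn 𝕜 s f)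
    {a b c d : 𝕜} (ha : a ∈ s) (hd : d ∈ s) (hab : a < b) (hbd : b < d) (h : b + c = a + d) :
    f b + f c ≤ f a + f d := by
  obtain rfl : c = a + d - b := by linear_combination h
  -- Jensen on the chord from `a` to `d`, at `b` and at `c`: the weights of `c` are those of `b`
  -- swapped, so the two inequalities add up to the claim.
  have hb := hf.secant_mono_aux1 ha hd hab hbd
  have hc := hf.secant_mono_aux1 ha hd (y := a + d - b) (by linarith) (by linarith)
  refine le_of_mul_le_mul_left ?_ (sub_pos.mpr (hab.trans hbd))
  linear_combination hb + hc

lemma Real.sq_rpow_half {r : ℝ} (hr : 0 ≤ r) (q : ℝ) : (r ^ 2) ^ (q / 2) = r ^ q := by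
  rw [← rpow_natCast, ← rpow_mul hr, Nat.cast_ofNat, mul_div_cancel₀ q two_ne_zero]

lemma coord_reflect_of_ne {n i j : ℕ} (x : EuclideanSpace ℝ (Fin n)) (hij : j ≠ i) :
    coord (reflect i x) j = coord x j := by
  unfold coord
  split_ifs
  · exact if_neg hij
  · rfl

lemma sum_ite_val_eq_coord_mul_coord {n : ℕ} (x y : EuclideanSpace ℝ (Fin n)) (i : ℕ) :
    ∑ j : Fin n, (if (j : ℕ) = i then x j * y j else 0) = coord x i * coord y i := by
  unfold coord
  split_ifs with hi
  · rw [Finset.sum_eq_single_of_mem ⟨i, hi⟩ (Finset.mem_univ _)]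
    · simp
    · intro j _ hj
      simp [Fin.ext_iff.not.mp hj]
  · rw [mul_zero]
    exact Finset.sum_eq_zero fun j _ ↦ if_neg fun h : (j : ℕ) = i ↦ hi (h ▸ j.isLt)

lemma norm_sub_reflect_sq {n : ℕ} (x y : EuclideanSpace ℝ (Fin n)) (i : ℕ) :
    ‖x - reflect i y‖ ^ 2 = ‖x - y‖ ^ 2 + 4 * coord x i * coord y i := by
  rw [EuclideanSpace.norm_sq_eq, EuclideanSpace.norm_sq_eq, mul_assoc,
    ← sum_ite_val_eq_coord_mul_coord, Finset.mul_sum, ← Finset.sum_add_distrib]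
  refine Finset.sum_congr rfl fun j _ ↦ ?_
  by_cases h : (j : ℕ) = i
  · simp [reflect, h]
    ring
  · simp [reflect, h]

theorem kernel_positive_general (n : ℕ) (α : ℝ) (hα : 0 < α)
    (x y : EuclideanSpace ℝ (Fin n))
    (hx1 : 0 < coord x 0) (hx2 : 0 < coord x 1)
    (hy1 : 0 < coord y 0) (hy2 : 0 < coord y 1) (hxy : x ≠ y) :
    0 ≤ ‖x - y‖ ^ (-((n : ℝ) + α)) - ‖x - reflect 0 y‖ ^ (-((n : ℝ) + α))
        - ‖x - reflect 1 y‖ ^ (-((n : ℝ) + α))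
        + ‖x - reflect 0 (reflect 1 y)‖ ^ (-((n : ℝ) + α)) := by
  have hb := norm_sub_reflect_sq x y 0
  have hc := norm_sub_reflect_sq x y 1
  have hd : ‖x - reflect 0 (reflect 1 y)‖ ^ 2
      = ‖x - y‖ ^ 2 + 4 * coord x 0 * coord y 0 + 4 * coord x 1 * coord y 1 := by
    rw [norm_sub_reflect_sq, hc, coord_reflect_of_ne y zero_ne_one]
    ring
  have ha : 0 < ‖x - y‖ ^ 2 := by positivity [sub_ne_zero.mpr hxy]
  have hs : 0 < 4 * coord x 0 * coord y 0 := by positivity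
  have ht : 0 < 4 * coord x 1 * coord y 1 := by positivity
  have hf := Real.convexOn_rpow_neg (p := ((n : ℝ) + α) / 2) (by positivity)
  have hK := hf.map_add_map_le_of_add_eq
    (b := ‖x - reflect 0 y‖ ^ 2) (c := ‖x - reflect 1 y‖ ^ 2)
    (d := ‖x - reflect 0 (reflect 1 y)‖ ^ 2)
    ha (by rw [mem_Ioi, hd]; positivity) (by linarith) (by linarith) (by linarith)
  simp only [← neg_div, Real.sq_rpow_half (norm_nonneg _)] at hK
  linarith

/-- Positivity of the doubly anti-symmetrized kernel `K(x,y)` on the quarter space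
`I = {x₁ > 0, x₂ > 0}`. -/
theorem kernel_positive (n : ℕ) (hn : 2 ≤ n) (α : ℝ) (hα : 0 < α) (hα2 : α < 2)
    (x y : EuclideanSpace ℝ (Fin n))
    (hx1 : 0 < coord x 0) (hx2 : 0 < coord x 1)
    (hy1 : 0 < coord y 0) (hy2 : 0 < coord y 1) (hxy : x ≠ y) :
    0 ≤ ‖x - y‖ ^ (-((n : ℝ) + α)) - ‖x - reflect 0 y‖ ^ (-((n : ℝ) + α))
        - ‖x - reflect 1 y‖ ^ (-((n : ℝ) + α))
        + ‖x - reflect 0 (reflect 1 y)‖ ^ (-((n : ℝ) + α)) :=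
  kernel_positive_general n α hα x y hx1 hx2 hy1 hy2 hxy
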